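/- In the QC model, assume additionally that α(i) ≤ 2/(λ₂ + λ_N) for all i. Then the mean state vectors converge to the consensus vector r𝟏 at an exponential rate governed by the partial sums of the weights: for every i ≥ 0, ‖𝔼[x(i)] − r𝟏‖ ≤ exp(−λ₂·∑_{j=0}^{i−1} α(j))·‖x(0) − r𝟏‖. -/

import Mathlib

open MeasureTheory ProbabilityTheory Filter Finset

noncomputable section

/-- Euclidean norm on `Fin N → ℝ`. -/
def euclNorm {N : ℕ} (y : Fin N → ℝ) : ℝ := Real.sqrt (∑ n, (y n) ^ 2)

/-- Quadratic form `yᵀ A y`. -/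
def quadForm {N : ℕ} (A : Matrix (Fin N) (Fin N) ℝ) (y : Fin N → ℝ) : ℝ :=
  ∑ n, y n * A.mulVec y n

/-- Componentwise average `(1/N) 𝟏ᵀ y`. -/
def avgOf {N : ℕ} (y : Fin N → ℝ) : ℝ := (∑ n, y n) / N

/-- Orthogonal projection of `y` onto the orthogonal complement of the consensus
subspace `𝒞 = {a𝟏 : a ∈ ℝ}`. -/
def perpOf {N : ℕ} (y : Fin N → ℝ) : Fin N → ℝ := fun n => y n - avgOf y

/-- The sequence `g(i) = α(i)² max(λ_N³/λ₂ + 4N²λ_N/λ₂, 2MΔ²λ_N/3)`. -/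
def gseq (N M : ℕ) (Δ lam2 lamN : ℝ) (α : ℕ → ℝ) (i : ℕ) : ℝ :=
  α i ^ 2 * max (lamN ^ 3 / lam2 + 4 * N ^ 2 * lamN / lam2) (2 * M * Δ ^ 2 * lamN / 3)

/-- The QC (dithered quantized consensus with random link failures) model. -/
structure QCModel (N : ℕ) (Δ : ℝ) (M : ℕ) (α : ℕ → ℝ)
    (Lbar : Matrix (Fin N) (Fin N) ℝ) (lam2 lamN : ℝ)
    {Ω : Type} [mΩ : MeasurableSpace Ω] (Pr : Measure Ω)
    (x0 : Fin N → ℝ)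
    (x : ℕ → Ω → Fin N → ℝ)
    (L : ℕ → Ω → Matrix (Fin N) (Fin N) ℝ)
    (Υ Ψ : ℕ → Ω → Fin N → ℝ)
    (ℱ : Filtration ℕ mΩ) : Prop where
  hprob : IsProbabilityMeasure Pr
  hN : 2 ≤ N
  hΔ : 0 < Δ
  hM : 1 ≤ M
  hα_pos : ∀ i, 0 < α i
  hα_div : Tendsto (fun n => ∑ i ∈ Finset.range n, α i) atTop atTop
  hα_sq : Summable fun i => α i ^ 2
  hLbar_symm : Lbar.IsSymm
  hLbar_psd : Lbar.PosSemidef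
  hLbar_one : Lbar.mulVec 1 = 0
  hlam2_pos : 0 < lam2
  hlam_le : lam2 ≤ lamN
  hspec_lo : ∀ y : Fin N → ℝ, ∑ n, y n = 0 → lam2 * euclNorm y ^ 2 ≤ quadForm Lbar y
  hspec_hi : ∀ y : Fin N → ℝ, ∑ n, y n = 0 → quadForm Lbar y ≤ lamN * euclNorm y ^ 2
  hx0 : ∀ ω, x 0 ω = x0
  hL_meas : ∀ i n m, Measurable fun ω => L i ω n m
  hΥ_meas : ∀ i, Measurable (Υ i)
  hΨ_meas : ∀ i, Measurable (Ψ i)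
  hL_symm : ∀ i ω, (L i ω).IsSymm
  hL_one : ∀ i, ∀ᵐ ω ∂Pr, (L i ω).mulVec 1 = 0
  hL_mean : ∀ i n m, ∫ ω, L i ω n m ∂Pr = Lbar n m
  hL_op : ∀ i, ∀ᵐ ω ∂Pr, ∀ y : Fin N → ℝ,
    euclNorm ((L i ω - Lbar).mulVec y) ≤ 2 * N * euclNorm y
  hΥ_L2 : ∀ i, MemLp (Υ i) 2 Pr
  hΨ_L2 : ∀ i, MemLp (Ψ i) 2 Pr
  hΥ_mean : ∀ i n, ∫ ω, Υ i ω n ∂Pr = 0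
  hΨ_mean : ∀ i n, ∫ ω, Ψ i ω n ∂Pr = 0
  hvar_eq : ∀ i, ∫ ω, euclNorm (Υ i ω) ^ 2 ∂Pr = ∫ ω, euclNorm (Ψ i ω) ^ 2 ∂Pr
  hvar_le : ∀ i, ∫ ω, euclNorm (Υ i ω) ^ 2 ∂Pr ≤ M * Δ ^ 2 / 6
  hℱ : ∀ i, ℱ i = ⨆ j ∈ Set.Iio i,
      (MeasurableSpace.comap (fun ω n m => L j ω n m) inferInstance ⊔
       MeasurableSpace.comap (Υ j) inferInstance ⊔
       MeasurableSpace.comap (Ψ j) inferInstance)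
  hindep : ∀ i, iIndep
      ![MeasurableSpace.comap (fun ω n m => L i ω n m) inferInstance,
        MeasurableSpace.comap (Υ i) inferInstance,
        MeasurableSpace.comap (Ψ i) inferInstance,
        ℱ i] Pr
  hrec : ∀ i ω, x (i + 1) ω = x i ω - α i • ((L i ω).mulVec (x i ω) + Υ i ω + Ψ i ω)


/-!
Taking expectations in the recursion, the mean `μ(i) = 𝔼[x(i)]` follows the deterministic
gradient iteration `μ(i+1) = (I - α(i) L̄) μ(i)`: the matrix `L(i)` is independent of `x(i)`,
which is `ℱ_i`-measurable, and the dithers are centred. Since `L̄ 𝟏 = 0` and `L̄` is symmetric,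
the error `μ(i) - r𝟏` stays orthogonal to `𝟏`. On `𝟏^⊥` we have `0 ≤ L̄ - λ₂ ≤ λ_N - λ₂`, hence
`(L̄ - λ₂)² ≤ (λ_N - λ₂)(L̄ - λ₂)`, which gives `‖(I - a L̄) y‖ ≤ (1 - a λ₂) ‖y‖` for
`0 ≤ a ≤ 2 / (λ₂ + λ_N)`. Finally `1 - t ≤ exp (-t)`.
-/

open Matrix

section LinearAlgebra

variable {ι : Type*} [Fintype ι]

def sumZeroSubmodule (ι : Type*) [Fintype ι] : Submodule ℝ (ι → ℝ) where
  carrier := {y | ∑ i, y i = 0}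
  add_mem' := by simp_all [Finset.sum_add_distrib]
  zero_mem' := by simp
  smul_mem' := by simp_all [← Finset.mul_sum]

theorem Matrix.IsSymm.dotProduct_mulVec_comm {A : Matrix ι ι ℝ} (hA : A.IsSymm) (v w : ι → ℝ) :
    v ⬝ᵥ A *ᵥ w = A *ᵥ v ⬝ᵥ w := by
  rw [dotProduct_mulVec, ← mulVec_transpose, hA]

theorem Matrix.IsSymm.sum_mulVec_eq_zero {A : Matrix ι ι ℝ} (hA : A.IsSymm) (h1 : A *ᵥ 1 = 0)
    (v : ι → ℝ) : ∑ i, (A *ᵥ v) i = 0 := by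
  have := hA.dotProduct_mulVec_comm 1 v
  rw [h1, zero_dotProduct] at this
  simpa [dotProduct, eq_comm] using this

/-- `P² ≤ c P` on an invariant subspace where `0 ≤ P ≤ c`: test `0 ≤ P` on `v - t • P v`
with `t = c⁻¹`. -/
theorem Matrix.IsSymm.mulVec_dotProduct_mulVec_le {P : Matrix ι ι ℝ} (hP : P.IsSymm)
    {V : Submodule ℝ (ι → ℝ)} (hV : ∀ v ∈ V, P *ᵥ v ∈ V) {c : ℝ}
    (h0 : ∀ v ∈ V, 0 ≤ v ⬝ᵥ P *ᵥ v) (hc : ∀ v ∈ V, v ⬝ᵥ P *ᵥ v ≤ c * (v ⬝ᵥ v))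
    {v : ι → ℝ} (hv : v ∈ V) : P *ᵥ v ⬝ᵥ P *ᵥ v ≤ c * (v ⬝ᵥ P *ᵥ v) := by
  set w := P *ᵥ v
  have hw : w ∈ V := hV v hv
  have hquad : ∀ t : ℝ, 0 ≤ v ⬝ᵥ w - 2 * t * (w ⬝ᵥ w) + t ^ 2 * (w ⬝ᵥ P *ᵥ w) := by
    intro t
    have := h0 (v - t • w) (V.sub_mem hv (V.smul_mem t hw))
    simp only [mulVec_sub, mulVec_smul, sub_dotProduct, dotProduct_sub, smul_dotProduct,
      dotProduct_smul, smul_eq_mul, hP.dotProduct_mulVec_comm v w] at this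
    linarith
  have hPw : w ⬝ᵥ P *ᵥ w ≤ c * (w ⬝ᵥ w) := hc w hw
  have hww : 0 ≤ w ⬝ᵥ w := by simpa using dotProduct_star_self_nonneg w
  rcases lt_or_ge 0 c with hc0 | hc0
  · have := hquad c⁻¹
    field_simp at this
    nlinarith
  · have hvv : 0 ≤ v ⬝ᵥ v := by simpa using dotProduct_star_self_nonneg v
    have hvw : v ⬝ᵥ w = 0 :=
      le_antisymm ((hc v hv).trans (mul_nonpos_of_nonpos_of_nonneg hc0 hvv)) (h0 v hv)
    have := hquad 1
    nlinarith [mul_nonpos_of_nonpos_of_nonneg hc0 hww]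

end LinearAlgebra

section EuclNorm

variable {N : ℕ}

theorem abs_apply_le_euclNorm (y : Fin N → ℝ) (n : Fin N) : |y n| ≤ euclNorm y :=
  Real.abs_le_sqrt (Finset.single_le_sum (f := fun k => y k ^ 2) (fun _ _ => sq_nonneg _)
    (Finset.mem_univ n))

theorem euclNorm_single_one (m : Fin N) : euclNorm (Pi.single m 1 : Fin N → ℝ) = 1 := by
  simp [euclNorm, Pi.single_apply]

theorem sum_sub_avgOf (y : Fin N → ℝ) : ∑ n, (y n - avgOf y) = 0 := by
  rcases Nat.eq_zero_or_pos N with rfl | hN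
  · simp
  · simp [avgOf, Finset.sum_sub_distrib, mul_div_cancel₀, hN.ne']

theorem euclNorm_eq_sqrt_dotProduct (y : Fin N → ℝ) : euclNorm y = √(y ⬝ᵥ y) := by
  simp [euclNorm, dotProduct, sq]

theorem euclNorm_sq (y : Fin N → ℝ) : euclNorm y ^ 2 = y ⬝ᵥ y := by
  rw [euclNorm_eq_sqrt_dotProduct, Real.sq_sqrt (by simpa using dotProduct_star_self_nonneg y)]

end EuclNorm

section Contraction

variable {N : ℕ} {Lb : Matrix (Fin N) (Fin N) ℝ} {lam2 lamN : ℝ}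

theorem euclNorm_sub_smul_mulVec_le (hsymm : Lb.IsSymm) (hone : Lb *ᵥ 1 = 0)
    (hlam2 : 0 < lam2) (hle : lam2 ≤ lamN)
    (hlo : ∀ y : Fin N → ℝ, ∑ n, y n = 0 → lam2 * euclNorm y ^ 2 ≤ quadForm Lb y)
    (hhi : ∀ y : Fin N → ℝ, ∑ n, y n = 0 → quadForm Lb y ≤ lamN * euclNorm y ^ 2)
    {a : ℝ} (ha0 : 0 ≤ a) (ha : a ≤ 2 / (lam2 + lamN)) {y : Fin N → ℝ} (hy : ∑ n, y n = 0) :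
    euclNorm (y - a • Lb *ᵥ y) ≤ (1 - a * lam2) * euclNorm y := by
  set P := Lb - lam2 • (1 : Matrix (Fin N) (Fin N) ℝ)
  have hPv : ∀ v, P *ᵥ v = Lb *ᵥ v - lam2 • v := fun v => by
    simp [P, sub_mulVec, smul_mulVec]
  have hP : P.IsSymm := hsymm.sub (Matrix.isSymm_one.smul lam2)
  have hPV : ∀ v ∈ sumZeroSubmodule (Fin N), P *ᵥ v ∈ sumZeroSubmodule (Fin N) := by
    intro v hv
    rw [hPv]
    exact Submodule.sub_mem _ (hsymm.sum_mulVec_eq_zero hone v) (Submodule.smul_mem _ _ hv)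
  have hquad : ∀ v : Fin N → ℝ, v ⬝ᵥ P *ᵥ v = quadForm Lb v - lam2 * euclNorm v ^ 2 := by
    intro v
    rw [hPv, dotProduct_sub, dotProduct_smul, smul_eq_mul, euclNorm_sq]
    rfl
  -- `0 ≤ P ≤ lamN - lam2` on the sum-zero vectors, hence `‖P y‖² ≤ (lamN - lam2) ⟪y, P y⟫`
  have hkey := hP.mulVec_dotProduct_mulVec_le hPV
    (fun v hv => by rw [hquad]; linarith [hlo v hv])
    (fun v hv => by rw [hquad, ← euclNorm_sq]; linarith [hhi v hv]) (c := lamN - lam2) hy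
  have hQ : 0 ≤ y ⬝ᵥ P *ᵥ y := by rw [hquad]; linarith [hlo y hy]
  have hstep : 0 ≤ 2 - a * (lam2 + lamN) := by
    have := (le_div_iff₀ (by linarith)).mp ha
    linarith
  have hrate : 0 ≤ 1 - a * lam2 := by nlinarith
  have hsplit : y - a • Lb *ᵥ y = (1 - a * lam2) • y - a • P *ᵥ y := by
    rw [hPv]; module
  have hsq : (y - a • Lb *ᵥ y) ⬝ᵥ (y - a • Lb *ᵥ y) ≤ (1 - a * lam2) ^ 2 * (y ⬝ᵥ y) := by
    rw [hsplit]
    simp only [sub_dotProduct, dotProduct_sub, smul_dotProduct, dotProduct_smul, smul_eq_mul,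
      dotProduct_comm (P *ᵥ y) y]
    nlinarith [mul_nonneg (mul_nonneg ha0 hstep) hQ, mul_le_mul_of_nonneg_left hkey (sq_nonneg a)]
  calc euclNorm (y - a • Lb *ᵥ y) ≤ √((1 - a * lam2) ^ 2 * (y ⬝ᵥ y)) := by
        rw [euclNorm_eq_sqrt_dotProduct]; exact Real.sqrt_le_sqrt hsq
    _ = (1 - a * lam2) * euclNorm y := by
        rw [Real.sqrt_mul (sq_nonneg _), Real.sqrt_sq hrate, euclNorm_eq_sqrt_dotProduct]

theorem euclNorm_iterate_le_exp (hsymm : Lb.IsSymm) (hone : Lb *ᵥ 1 = 0)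
    (hlam2 : 0 < lam2) (hle : lam2 ≤ lamN)
    (hlo : ∀ y : Fin N → ℝ, ∑ n, y n = 0 → lam2 * euclNorm y ^ 2 ≤ quadForm Lb y)
    (hhi : ∀ y : Fin N → ℝ, ∑ n, y n = 0 → quadForm Lb y ≤ lamN * euclNorm y ^ 2)
    {α : ℕ → ℝ} (hα0 : ∀ i, 0 ≤ α i) (hα : ∀ i, α i ≤ 2 / (lam2 + lamN))
    {y : ℕ → Fin N → ℝ} (hy : ∀ i, y (i + 1) = y i - α i • Lb *ᵥ y i) (hy0 : ∑ n, y 0 n = 0)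
    (i : ℕ) : euclNorm (y i) ≤ Real.exp (-(lam2 * ∑ j ∈ range i, α j)) * euclNorm (y 0) := by
  have hsum : ∀ i, ∑ n, y i n = 0 := by
    intro i
    induction i with
    | zero => exact hy0
    | succ i ih =>
      simp [hy, Finset.sum_sub_distrib, ← Finset.mul_sum, ih, hsymm.sum_mulVec_eq_zero hone]
  induction i with
  | zero => simp
  | succ i ih =>
    calc euclNorm (y (i + 1)) ≤ (1 - α i * lam2) * euclNorm (y i) := by
          rw [hy]
          exact euclNorm_sub_smul_mulVec_le hsymm hone hlam2 hle hlo hhi (hα0 i) (hα i) (hsum i)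
      _ ≤ Real.exp (-(α i * lam2)) *
            (Real.exp (-(lam2 * ∑ j ∈ range i, α j)) * euclNorm (y 0)) := by
          gcongr
          · exact Real.sqrt_nonneg _
          · exact Real.one_sub_le_exp_neg _
      _ = Real.exp (-(lam2 * ∑ j ∈ range (i + 1), α j)) * euclNorm (y 0) := by
          rw [Finset.sum_range_succ, ← mul_assoc, ← Real.exp_add]
          ring_nf

end Contraction

namespace QCModel

variable {N : ℕ} {Δ : ℝ} {M : ℕ} {α : ℕ → ℝ} {Lbar : Matrix (Fin N) (Fin N) ℝ} {lam2 lamN : ℝ}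
  {Ω : Type} [mΩ : MeasurableSpace Ω] {Pr : Measure Ω} {x0 : Fin N → ℝ}
  {x : ℕ → Ω → Fin N → ℝ} {L : ℕ → Ω → Matrix (Fin N) (Fin N) ℝ} {Υ Ψ : ℕ → Ω → Fin N → ℝ}
  {ℱ : Filtration ℕ mΩ}
  (h : QCModel N Δ M α Lbar lam2 lamN Pr x0 x L Υ Ψ ℱ)
include h

theorem state_succ_apply (i : ℕ) (ω : Ω) (n : Fin N) :
    x (i + 1) ω n = x i ω n - α i * (∑ m, L i ω n m * x i ω m + Υ i ω n + Ψ i ω n) := by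
  simp [h.hrec i ω, mulVec, dotProduct, mul_add]

theorem measurable_state (i : ℕ) : Measurable[ℱ i] (x i) := by
  induction i with
  | zero => simp [funext h.hx0]
  | succ i ih =>
    have hgen : MeasurableSpace.comap (fun ω n m => L i ω n m) inferInstance ⊔
        MeasurableSpace.comap (Υ i) inferInstance ⊔
        MeasurableSpace.comap (Ψ i) inferInstance ≤ ℱ (i + 1) := by
      rw [h.hℱ (i + 1)]
      exact le_iSup₂_of_le i (Set.mem_Iio.mpr i.lt_succ_self) le_rfl
    have hL : Measurable[ℱ (i + 1)] (fun ω n m => L i ω n m) :=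
      Measurable.of_comap_le (le_sup_left.trans (le_sup_left.trans hgen))
    have hΥ : Measurable[ℱ (i + 1)] (Υ i) :=
      Measurable.of_comap_le (le_sup_right.trans (le_sup_left.trans hgen))
    have hΨ : Measurable[ℱ (i + 1)] (Ψ i) := Measurable.of_comap_le (le_sup_right.trans hgen)
    have hx : Measurable[ℱ (i + 1)] (x i) := ih.mono (ℱ.mono i.le_succ) le_rfl
    refine @measurable_pi_lambda _ _ _ (ℱ (i + 1)) _ _ fun n => ?_
    simp_rw [h.state_succ_apply]
    fun_prop

theorem abs_L_apply_le (i : ℕ) (n m : Fin N) :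
    ∀ᵐ ω ∂Pr, |L i ω n m| ≤ |Lbar n m| + 2 * N := by
  filter_upwards [h.hL_op i] with ω hω
  have hentry := (abs_apply_le_euclNorm _ n).trans (hω (Pi.single m 1))
  simp [euclNorm_single_one] at hentry
  linarith [abs_sub_abs_le_abs_sub (L i ω n m) (Lbar n m)]

theorem integrable_L_mul {f : Ω → ℝ} (hf : Integrable f Pr) (i : ℕ) (n m : Fin N) :
    Integrable (fun ω => L i ω n m * f ω) Pr :=
  hf.bdd_mul (h.hL_meas i n m).aestronglyMeasurable
    (by simpa only [Real.norm_eq_abs] using h.abs_L_apply_le i n m)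

theorem integrable_state (i : ℕ) (n : Fin N) : Integrable (fun ω => x i ω n) Pr := by
  have := h.hprob
  induction i generalizing n with
  | zero => simp [h.hx0]
  | succ i ih =>
    simp_rw [h.state_succ_apply]
    have hLx := integrable_finsetSum univ fun m _ => h.integrable_L_mul (ih m) i n m
    have hΥ := ((h.hΥ_L2 i).integrable one_le_two).eval n
    have hΨ := ((h.hΨ_L2 i).integrable one_le_two).eval n
    exact (ih n).sub (((hLx.add hΥ).add hΨ).const_mul _)

theorem integral_L_mul_state (i : ℕ) (n m : Fin N) :
    ∫ ω, L i ω n m * x i ω m ∂Pr = Lbar n m * ∫ ω, x i ω m ∂Pr := by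
  have hindep : Indep (MeasurableSpace.comap (fun ω n m => L i ω n m) inferInstance) (ℱ i) Pr := by
    simpa using (h.hindep i).indep (i := 0) (j := 3) (by decide)
  have hLnm : Measurable[MeasurableSpace.comap (fun ω n m => L i ω n m) inferInstance]
      (fun ω => L i ω n m) := by
    have := comap_measurable (m := inferInstance) (fun ω n m => L i ω n m)
    fun_prop
  have hxm : Measurable[ℱ i] (fun ω => x i ω m) := by
    have := h.measurable_state i
    fun_prop
  have hfun : IndepFun (fun ω => L i ω n m) (fun ω => x i ω m) Pr :=
    indep_of_indep_of_le_right (indep_of_indep_of_le_left hindep hLnm.comap_le) hxm.comap_le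
  rw [hfun.integral_fun_mul_eq_mul_integral (h.hL_meas i n m).aestronglyMeasurable
    (h.integrable_state i m).aestronglyMeasurable, h.hL_mean]

theorem integral_state_succ (i : ℕ) (n : Fin N) :
    ∫ ω, x (i + 1) ω n ∂Pr =
      ∫ ω, x i ω n ∂Pr - α i * (Lbar *ᵥ fun m => ∫ ω, x i ω m ∂Pr) n := by
  have := h.hprob
  have hLx : Integrable (fun ω => ∑ m, L i ω n m * x i ω m) Pr :=
    integrable_finsetSum univ fun m _ => h.integrable_L_mul (h.integrable_state i m) i n m
  have hΥ : Integrable (fun ω => Υ i ω n) Pr := ((h.hΥ_L2 i).integrable one_le_two).eval n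
  have hLxΥ : Integrable (fun ω => ∑ m, L i ω n m * x i ω m + Υ i ω n) Pr := hLx.add hΥ
  have hΨ : Integrable (fun ω => Ψ i ω n) Pr := ((h.hΨ_L2 i).integrable one_le_two).eval n
  have hall : Integrable (fun ω => ∑ m, L i ω n m * x i ω m + Υ i ω n + Ψ i ω n) Pr :=
    hLxΥ.add hΨ
  simp_rw [h.state_succ_apply]
  rw [integral_sub (h.integrable_state i n) (hall.const_mul _),
    integral_const_mul, integral_add hLxΥ hΨ, integral_add hLx hΥ,
    integral_finsetSum _ fun m _ => h.integrable_L_mul (h.integrable_state i m) i n m,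
    h.hΥ_mean, h.hΨ_mean]
  simp [mulVec, dotProduct, h.integral_L_mul_state]

theorem mean_error_zero :
    (fun n => ∫ ω, x 0 ω n ∂Pr - avgOf x0) = fun n => x0 n - avgOf x0 := by
  have := h.hprob
  simp [h.hx0]

theorem mean_error_succ (i : ℕ) :
    (fun n => ∫ ω, x (i + 1) ω n ∂Pr - avgOf x0) =
      (fun n => ∫ ω, x i ω n ∂Pr - avgOf x0) -
        α i • Lbar *ᵥ fun n => ∫ ω, x i ω n ∂Pr - avgOf x0 := by
  have hshift : (fun n => ∫ ω, x i ω n ∂Pr - avgOf x0) =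
      (fun n => ∫ ω, x i ω n ∂Pr) - avgOf x0 • 1 := by
    ext; simp
  rw [hshift, mulVec_sub, mulVec_smul, h.hLbar_one]
  ext n
  simp [h.integral_state_succ]
  ring

end QCModel

theorem stmt_7 {N : ℕ} {Δ : ℝ} {M : ℕ} {α : ℕ → ℝ}
    {Lbar : Matrix (Fin N) (Fin N) ℝ} {lam2 lamN : ℝ}
    {Ω : Type} [mΩ : MeasurableSpace Ω] {Pr : Measure Ω}
    {x0 : Fin N → ℝ} {x : ℕ → Ω → Fin N → ℝ}
    {L : ℕ → Ω → Matrix (Fin N) (Fin N) ℝ} {Υ Ψ : ℕ → Ω → Fin N → ℝ}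
    {ℱ : Filtration ℕ mΩ}
    (h : QCModel N Δ M α Lbar lam2 lamN Pr x0 x L Υ Ψ ℱ)
    (hα_le : ∀ i, α i ≤ 2 / (lam2 + lamN)) :
    ∀ i : ℕ, euclNorm (fun n => (∫ ω, x i ω n ∂Pr) - avgOf x0) ≤
      Real.exp (-(lam2 * ∑ j ∈ Finset.range i, α j)) *
        euclNorm (fun n => x0 n - avgOf x0) := by
  intro i
  have hbound := euclNorm_iterate_le_exp h.hLbar_symm h.hLbar_one h.hlam2_pos h.hlam_le
    h.hspec_lo h.hspec_hi (fun j => (h.hα_pos j).le) hα_le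
    (y := fun i n => ∫ ω, x i ω n ∂Pr - avgOf x0) h.mean_error_succ
    (by rw [h.mean_error_zero]; exact sum_sub_avgOf x0) i
  rwa [h.mean_error_zero] at hbound
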